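/- arXiv:2504.17348 — 8 statements merged into one kernel-verified Lean document; each statement's English description precedes it below -/
import Mathlib

section
/- Let F be an algebraically closed field, let A be an n×n matrix over F, and let d be the degree of the minimal polynomial of A. If 2d > n, then there exists a polynomial p ∈ F[X] of degree at most d − 1 such that the matrix p(A) has rank exactly 1. -/
/-!
Let `m` be the minimal polynomial, of degree `d`, and for each root `μ` of multiplicity `e_μ` put
`p_μ = m / (X - μ)`, of degree `d - 1`. Since `deg p_μ < d`, `p_μ(A) ≠ 0`. Writing
`p_μ = (X - μ)^(e_μ - 1) q_μ`, the range of `q_μ(A)` lies in the generalized eigenspace `V_μ`, and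
`N = A - μ` acts on it with `N^(e_μ) = 0`; the ranks of `N^j q_μ(A)` then drop by at least
`rank p_μ(A)` at each of the `e_μ` steps, so `e_μ · rank p_μ(A) ≤ dim V_μ`. If every `p_μ(A)` had
rank at least `2`, summing over `μ` would give `2d ≤ ∑ dim V_μ ≤ n`.
-/

open Polynomial Module LinearMap

theorem minpoly.aeval_divByMonic_X_sub_C_ne_zero {A B : Type*} [CommRing A] [Nontrivial A]
    [Ring B] [Algebra A B] {x : B} (hx : IsIntegral A x) {μ : A} (hμ : (minpoly A x).IsRoot μ) :
    Polynomial.aeval x (minpoly A x /ₘ (X - C μ)) ≠ 0 := by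
  have hmul := mul_divByMonic_eq_iff_isRoot.2 hμ
  have hmonic : (minpoly A x /ₘ (X - C μ)).Monic :=
    (monic_X_sub_C μ).of_mul_monic_left (by rw [hmul]; exact minpoly.monic hx)
  exact minpoly.aeval_ne_zero_of_dvdNotUnit_minpoly hx hmonic
    ⟨hmonic.ne_zero, X - C μ, not_isUnit_X_sub_C μ, by rw [mul_comm, hmul]⟩

section

variable {K V W : Type*} [Field K] [AddCommGroup V] [Module K V] [AddCommGroup W] [Module K W]
  [FiniteDimensional K V]

theorem Submodule.finrank_map_add_finrank_inf_ker (U : Submodule K V) (N : V →ₗ[K] W) :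
    finrank K (U.map N) + finrank K (U ⊓ ker N : Submodule K V) = finrank K U := by
  rw [← Submodule.map_comap_subtype, Submodule.finrank_map_subtype_eq, ← ker_domRestrict,
    ← range_domRestrict, finrank_range_add_finrank_ker]

/-- The drops `finrank (range (N ^ j * B) ⊓ ker N)` of the ranks of `N ^ j * B` decrease in `j`,
and since `N ^ e * B = 0` the one at `j = e - 1` is the whole rank of `N ^ (e - 1) * B`. -/
theorem Module.End.mul_finrank_range_pow_pred_mul_le {N B : Module.End K V} (hNB : Commute N B)
    {e : ℕ} (he : N ^ e * B = 0) :
    e * finrank K (range (N ^ (e - 1) * B)) ≤ finrank K (range B) := by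
  set R : ℕ → Submodule K V := fun j ↦ range (N ^ j * B)
  set δ : ℕ → ℕ := fun j ↦ finrank K (R j ⊓ ker N : Submodule K V)
  have hR_succ (j : ℕ) : R (j + 1) = (R j).map N := by
    change range (N ^ (j + 1) * B) = (range (N ^ j * B)).map N
    rw [pow_succ', mul_assoc, Module.End.mul_eq_comp, range_comp]
  have hR_anti : Antitone R := antitone_nat_of_succ_le fun j ↦ by
    change range (N ^ (j + 1) * B) ≤ range (N ^ j * B)
    rw [pow_succ, mul_assoc, hNB.eq, ← mul_assoc, Module.End.mul_eq_comp]
    exact range_comp_le_range _ _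
  have hδ_anti : Antitone δ := fun i j hij ↦
    Submodule.finrank_mono (inf_le_inf_right _ (hR_anti hij))
  have htel (k : ℕ) : finrank K (R k) + ∑ j ∈ Finset.range k, δ j = finrank K (R 0) := by
    induction k with
    | zero => simp
    | succ k ih =>
      rw [Finset.sum_range_succ, ← ih, ← (R k).finrank_map_add_finrank_inf_ker N, ← hR_succ]
      ring
  obtain _ | k := e
  · simp
  have hR_zero : R 0 = range B := by simp [R]
  have hR_last : R (k + 1) = ⊥ := by simp [R, he]
  have hδ_last : δ k = finrank K (R k) := by
    have := (R k).finrank_map_add_finrank_inf_ker N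
    rwa [← hR_succ, hR_last, finrank_bot, zero_add] at this
  calc (k + 1) * finrank K (R k) = (Finset.range (k + 1)).card • δ k := by simp [hδ_last]
    _ ≤ ∑ j ∈ Finset.range (k + 1), δ j :=
      Finset.card_nsmul_le_sum _ _ _ fun j hj ↦ hδ_anti (Finset.mem_range_succ_iff.mp hj)
    _ = finrank K (range B) := by
      rw [← hR_zero, ← htel (k + 1), hR_last, finrank_bot, zero_add]

namespace Module.End

theorem rootMultiplicity_mul_finrank_range_aeval_divByMonic_le (f : Module.End K V) {p : K[X]}
    (hp : aeval f p = 0) (μ : K) :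
    rootMultiplicity μ p * finrank K (range (aeval f (p /ₘ (X - C μ)))) ≤
      finrank K (f.maxGenEigenspace μ) := by
  set q := p /ₘ (X - C μ) ^ rootMultiplicity μ p
  set N := aeval f (X - C μ)
  have hp_eq : (X - C μ) ^ rootMultiplicity μ p * q = p :=
    pow_mul_divByMonic_rootMultiplicity_eq p μ
  rcases he : rootMultiplicity μ p with _ | e
  · simp
  rw [he] at hp_eq
  have hdiv : p /ₘ (X - C μ) = (X - C μ) ^ e * q := by
    rw [← hp_eq, pow_succ', mul_assoc, mul_divByMonic_cancel_left _ (monic_X_sub_C μ)]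
  have hNq : N ^ (e + 1) * aeval f q = 0 := by rw [← map_pow, ← map_mul, hp_eq, hp]
  have hN : N = f - μ • 1 := by simp [N, Algebra.algebraMap_eq_smul_one]
  have hrange : range (aeval f q) ≤ f.maxGenEigenspace μ := by
    rintro _ ⟨v, rfl⟩
    exact (mem_maxGenEigenspace f μ _).2
      ⟨e + 1, by rw [← hN, ← mul_apply, hNq, LinearMap.zero_apply]⟩
  calc (e + 1) * finrank K (range (aeval f (p /ₘ (X - C μ))))
      = (e + 1) * finrank K (range (N ^ (e + 1 - 1) * aeval f q)) := by
        rw [hdiv, map_mul, map_pow, Nat.add_sub_cancel]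
    _ ≤ finrank K (range (aeval f q)) :=
        mul_finrank_range_pow_pred_mul_le ((Commute.all (X - C μ) q).map (aeval f)) hNq
    _ ≤ finrank K (f.maxGenEigenspace μ) := Submodule.finrank_mono hrange

theorem sum_finrank_maxGenEigenspace_le (f : Module.End K V) (s : Finset K) :
    ∑ μ ∈ s, finrank K (f.maxGenEigenspace μ) ≤ finrank K V := by
  classical
  simp_rw [LinearMap.finrank_maxGenEigenspace_eq, ← count_roots]
  calc ∑ μ ∈ s, f.charpoly.roots.count μ
      ≤ ∑ μ ∈ s ∪ f.charpoly.roots.toFinset, f.charpoly.roots.count μ :=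
        Finset.sum_le_sum_of_subset Finset.subset_union_left
    _ = Multiset.card f.charpoly.roots :=
        Multiset.sum_count_eq_card fun μ hμ ↦ Finset.mem_union_right _ (Multiset.mem_toFinset.2 hμ)
    _ ≤ finrank K V := (card_roots' _).trans f.charpoly_natDegree.le

theorem exists_natDegree_le_finrank_range_aeval_eq_one (f : Module.End K V)
    (hsplit : (minpoly K f).Splits) (h : finrank K V < 2 * (minpoly K f).natDegree) :
    ∃ p : K[X], p.natDegree ≤ (minpoly K f).natDegree - 1 ∧ finrank K (range (aeval f p)) = 1 := by
  classical
  set m := minpoly K f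
  by_contra! hne
  have hm : m ≠ 0 := minpoly.ne_zero (Algebra.IsIntegral.isIntegral f)
  have hdeg (μ : K) : (m /ₘ (X - C μ)).natDegree = m.natDegree - 1 := by
    rw [natDegree_divByMonic _ (monic_X_sub_C μ), natDegree_X_sub_C]
  have htwo : ∀ μ ∈ m.roots.toFinset, 2 ≤ finrank K (range (aeval f (m /ₘ (X - C μ)))) := by
    intro μ hμ
    have hroot : m.IsRoot μ := (mem_roots hm).1 (Multiset.mem_toFinset.1 hμ)
    have hpos : finrank K (range (aeval f (m /ₘ (X - C μ)))) ≠ 0 := by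
      rw [Ne, Submodule.finrank_eq_zero, range_eq_bot]
      exact minpoly.aeval_divByMonic_X_sub_C_ne_zero (Algebra.IsIntegral.isIntegral f) hroot
    have := hne _ (hdeg μ).le
    omega
  have hsum : ∑ μ ∈ m.roots.toFinset, rootMultiplicity μ m = m.natDegree := by
    simp_rw [← count_roots]
    rw [Multiset.toFinset_sum_count_eq, splits_iff_card_roots.1 hsplit]
  have : 2 * m.natDegree ≤ finrank K V := calc
    2 * m.natDegree = ∑ μ ∈ m.roots.toFinset, rootMultiplicity μ m * 2 := by
      rw [← Finset.sum_mul, hsum, mul_comm]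
    _ ≤ ∑ μ ∈ m.roots.toFinset, rootMultiplicity μ m *
          finrank K (range (aeval f (m /ₘ (X - C μ)))) :=
      Finset.sum_le_sum fun μ hμ ↦ Nat.mul_le_mul_left _ (htwo μ hμ)
    _ ≤ ∑ μ ∈ m.roots.toFinset, finrank K (f.maxGenEigenspace μ) :=
      Finset.sum_le_sum fun μ _ ↦
        rootMultiplicity_mul_finrank_range_aeval_divByMonic_le f (minpoly.aeval K f) μ
    _ ≤ finrank K V := sum_finrank_maxGenEigenspace_le f _
  omega

end Module.End

end

theorem exists_poly_rank_one_of_minpoly_deg_gt_half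
    (F : Type*) [Field F] [IsAlgClosed F] (n : ℕ)
    (A : Matrix (Fin n) (Fin n) F) (d : ℕ)
    (hd : (minpoly F A).natDegree = d) (h : 2 * d > n) :
    ∃ p : F[X], p.natDegree ≤ d - 1 ∧ Matrix.rank (Polynomial.aeval A p) = 1 := by
  have hmin : minpoly F (Matrix.toLinAlgEquiv' A) = minpoly F A := minpoly.algEquiv_eq _ A
  obtain ⟨p, hp_deg, hp_rank⟩ :=
    Module.End.exists_natDegree_le_finrank_range_aeval_eq_one (Matrix.toLinAlgEquiv' A)
      (IsAlgClosed.splits _) (by rw [hmin, hd, finrank_fin_fun]; omega)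
  rw [hmin, hd] at hp_deg
  rw [aeval_algHom_apply] at hp_rank
  -- `Matrix.rank M` is by definition the `finrank` of the range of `Matrix.toLin' M`.
  exact ⟨p, hp_deg, hp_rank⟩
end

section
/- Let F be an algebraically closed field, let A be an n×n matrix over F, and let λ ∈ F. If the minimal polynomial of A equals (X − λ)^d with 2d > n, then the matrix (A − λ·I)^{d−1} has rank exactly 1. -/
/-!
Put `N = A - λI`, so that `N ^ d = 0 ≠ N ^ (d - 1)`. The drop `rank N^k - rank N^(k+1)` is
`dim (ker N ⊓ range N^k)`, which is antitone in `k`, and for `k = d - 1` it is `rank N^(d-1)` itself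
because `range N^(d-1) ≤ ker N`. Summing the `d` drops gives `d * rank N^(d-1) ≤ n < 2 * d`.
-/

open Polynomial Matrix

namespace Module.End

open LinearMap Module

variable {K V : Type*} [DivisionRing K] [AddCommGroup V] [Module K V] [FiniteDimensional K V]

theorem finrank_map_add_finrank_ker_inf (f : End K V) (p : Submodule K V) :
    finrank K (p.map f) + finrank K ↥(ker f ⊓ p) = finrank K p := by
  have h := finrank_range_add_finrank_ker (f.domRestrict p)
  rwa [range_domRestrict, ker_domRestrict, ← Submodule.finrank_map_subtype_eq,
    Submodule.map_comap_subtype, inf_comm] at h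

theorem finrank_range_pow_succ_add (f : End K V) (k : ℕ) :
    finrank K (range (f ^ (k + 1))) + finrank K ↥(ker f ⊓ range (f ^ k)) =
      finrank K (range (f ^ k)) := by
  rw [pow_succ', mul_eq_comp, range_comp]
  exact finrank_map_add_finrank_ker_inf f _

theorem antitone_finrank_ker_inf_range_pow (f : End K V) :
    Antitone fun k ↦ finrank K ↥(ker f ⊓ range (f ^ k)) := by
  intro j k hjk
  obtain ⟨m, rfl⟩ := Nat.exists_eq_add_of_le hjk
  refine Submodule.finrank_mono (inf_le_inf_left _ ?_)
  rw [pow_add, mul_eq_comp]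
  exact range_comp_le_range _ _

theorem finrank_range_pow_add_sum (f : End K V) (d : ℕ) :
    finrank K (range (f ^ d)) + ∑ k ∈ Finset.range d, finrank K ↥(ker f ⊓ range (f ^ k)) =
      finrank K V := by
  induction d with
  | zero => rw [pow_zero, one_eq_id, range_id, finrank_top, Finset.sum_range_zero, add_zero]
  | succ d ih => rw [Finset.sum_range_succ, ← ih, ← finrank_range_pow_succ_add f d]; ring

theorem mul_finrank_range_pow_pred_le {f : End K V} {d : ℕ} (hf : f ^ d = 0) :
    d * finrank K (range (f ^ (d - 1))) ≤ finrank K V := by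
  rcases d with _ | m
  · simp
  have hker : range (f ^ m) ≤ ker f := by
    rw [range_le_ker_iff, ← mul_eq_comp, ← pow_succ', hf]
  calc (m + 1) * finrank K (range (f ^ m))
      = ∑ _k ∈ Finset.range (m + 1), finrank K ↥(ker f ⊓ range (f ^ m)) := by
        rw [inf_eq_right.mpr hker, Finset.sum_const, Finset.card_range, smul_eq_mul]
    _ ≤ ∑ k ∈ Finset.range (m + 1), finrank K ↥(ker f ⊓ range (f ^ k)) :=
        Finset.sum_le_sum fun k hk ↦
          antitone_finrank_ker_inf_range_pow f (Nat.lt_succ_iff.mp (Finset.mem_range.mp hk))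
    _ ≤ finrank K V := by
        rw [← finrank_range_pow_add_sum f (m + 1)]
        exact Nat.le_add_left _ _

end Module.End

theorem sub_algebraMap_pow_eq_zero_of_minpoly_eq {R A : Type*} [CommRing R] [Ring A]
    [Algebra R A] {x : A} {r : R} {d : ℕ} (hmin : minpoly R x = (X - C r) ^ d) :
    (x - algebraMap R A r) ^ d = 0 := by
  simpa [hmin] using minpoly.aeval R x

theorem sub_algebraMap_pow_pred_ne_zero_of_minpoly_eq {F A : Type*} [Field F] [Ring A]
    [Algebra F A] {x : A} {r : F} {d : ℕ} (hd : 0 < d) (hmin : minpoly F x = (X - C r) ^ d) :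
    (x - algebraMap F A r) ^ (d - 1) ≠ 0 := by
  intro h0
  have hdeg := natDegree_le_natDegree <| minpoly.degree_le_of_ne_zero F x
    ((monic_X_sub_C r).pow (d - 1)).ne_zero (by simpa using h0)
  rw [hmin, natDegree_pow, natDegree_pow, natDegree_X_sub_C] at hdeg
  omega

theorem Matrix.rank_eq_zero_iff {K m n : Type*} [Field K] [Fintype n] [DecidableEq n]
    {M : Matrix m n K} : M.rank = 0 ↔ M = 0 := by
  rw [rank, Submodule.finrank_eq_zero, LinearMap.range_eq_bot, ← toLin'_apply',
    EmbeddingLike.map_eq_zero_iff]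

theorem Matrix.rank_pow_eq_finrank_range_toLin'_pow {R n : Type*} [CommRing R] [Fintype n]
    [DecidableEq n] (M : Matrix n n R) (k : ℕ) :
    (M ^ k).rank = Module.finrank R (LinearMap.range (M.toLin' ^ k)) := by
  rw [← toLin'_pow, toLin'_apply', rank]

theorem rank_pow_eq_one_of_minpoly_single_eigenvalue_general
    (F : Type*) [Field F] (n : ℕ)
    (A : Matrix (Fin n) (Fin n) F) (lam : F) (d : ℕ)
    (hmin : minpoly F A = (X - C lam) ^ d) (h : 2 * d > n) :
    Matrix.rank ((A - lam • (1 : Matrix (Fin n) (Fin n) F)) ^ (d - 1)) = 1 := by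
  rw [← Algebra.algebraMap_eq_smul_one]
  set N := A - algebraMap F _ lam
  have hNd : N ^ d = 0 := sub_algebraMap_pow_eq_zero_of_minpoly_eq hmin
  have hpos : (N ^ (d - 1)).rank ≠ 0 := by
    rw [Ne, Matrix.rank_eq_zero_iff]
    exact sub_algebraMap_pow_pred_ne_zero_of_minpoly_eq (by omega) hmin
  have hle : d * (N ^ (d - 1)).rank ≤ n := by
    rw [rank_pow_eq_finrank_range_toLin'_pow]
    have hf : N.toLin' ^ d = 0 := by rw [← toLin'_pow, hNd, map_zero]
    simpa using Module.End.mul_finrank_range_pow_pred_le hf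
  have : (N ^ (d - 1)).rank < 2 := by
    by_contra!
    nlinarith
  omega

theorem rank_pow_eq_one_of_minpoly_single_eigenvalue
    (F : Type*) [Field F] [IsAlgClosed F] (n : ℕ)
    (A : Matrix (Fin n) (Fin n) F) (lam : F) (d : ℕ)
    (hmin : minpoly F A = (X - C lam) ^ d) (h : 2 * d > n) :
    Matrix.rank ((A - lam • (1 : Matrix (Fin n) (Fin n) F)) ^ (d - 1)) = 1 :=
  rank_pow_eq_one_of_minpoly_single_eigenvalue_general F n A lam d hmin h
end

section
/- Let F be an algebraically closed field, let A be an n×n matrix over F, and let λ₁, λ₂ ∈ F with λ₁ ≠ λ₂. If the minimal polynomial of A equals (X − λ₁)^m · (X − λ₂) with 2m ≥ n, then the matrix (A − λ₁·I)^{m−1} · (A − λ₂·I) has rank exactly 1. -/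
/-! With `N = A - λ₁` and `M = A - λ₂` the minimal polynomial gives `N ^ m * M = 0`, so each
vector `M x` starts a Jordan chain of length `m` for `N` inside `ker N ^ m`, and chains whose last
vectors are independent are jointly independent. Hence `m · rank (N ^ (m - 1) * M) ≤ dim ker N ^ m`.
An eigenvector for `λ₂` lies outside `ker N ^ m`, so `dim ker N ^ m < n ≤ 2 m` and the rank is at
most `1`; it is not `0` because `(X - λ₁) ^ (m - 1) * (X - λ₂)` has smaller degree than the minimal
polynomial. -/

open Polynomial Matrix

section

open Module Submodule LinearMap

theorem pow_apply_mem_ker_pow {R V : Type*} [Semiring R] [AddCommMonoid V] [Module R V]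
    (f : End R V) {m : ℕ} {z : V} (hz : (f ^ m) z = 0) (i : ℕ) : (f ^ i) z ∈ ker (f ^ m) := by
  rw [mem_ker, ← Module.End.mul_apply, ← pow_add, add_comm, pow_add, Module.End.mul_apply, hz,
    map_zero]

theorem linearIndependent_pow_apply {R V ι : Type*} [Ring R] [AddCommGroup V] [Module R V]
    (f : End R V) {m : ℕ} {z : ι → V} (hz : ∀ j, (f ^ (m + 1)) (z j) = 0)
    (hli : LinearIndependent R fun j ↦ (f ^ m) (z j)) :
    LinearIndependent R fun p : Fin (m + 1) × ι ↦ (f ^ (p.1 : ℕ)) (z p.2) := by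
  induction m generalizing z with
  | zero =>
    convert hli.comp _ (Equiv.uniqueProd ι (Fin 1)).injective using 1
    ext ⟨i, j⟩
    simp [Fin.fin_one_eq_zero i]
  | succ m ih =>
    have hz' : ∀ j, (f ^ (m + 1)) (f (z j)) = 0 := fun j ↦ by
      rw [← Module.End.mul_apply, ← pow_succ, hz]
    have hli' : LinearIndependent R fun j ↦ (f ^ m) (f (z j)) := by
      simpa only [← Module.End.mul_apply, ← pow_succ] using hli
    -- `f ^ (m + 1)` kills the rest of the chains but is injective on the span of their heads.
    have htail_le : span R (Set.range fun p : Fin (m + 1) × ι ↦ (f ^ (p.1 : ℕ)) (f (z p.2))) ≤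
        ker (f ^ (m + 1)) :=
      span_le.mpr <| Set.range_subset_iff.mpr fun p ↦ pow_apply_mem_ker_pow f (hz' p.2) p.1
    have hsum := (hli.of_comp (f ^ (m + 1))).sum_type (ih hz' hli')
      ((range_ker_disjoint hli).mono_right htail_le)
    let e : Fin (m + 1 + 1) × ι ≃ ι ⊕ Fin (m + 1) × ι :=
      (Equiv.prodCongr (finSuccEquiv (m + 1)) (Equiv.refl ι)).trans optionProdEquiv
    convert hsum.comp e e.injective using 1
    ext ⟨i, j⟩
    cases i using Fin.cases <;> simp [e, pow_succ]

theorem mul_finrank_range_pow_mul_le_finrank_ker {K V : Type*} [DivisionRing K] [AddCommGroup V]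
    [Module K V] [FiniteDimensional K V] (f g : End K V) {m : ℕ} (hfg : f ^ (m + 1) * g = 0) :
    (m + 1) * finrank K (range (f ^ m * g)) ≤ finrank K (ker (f ^ (m + 1))) := by
  let b := Module.finBasis K (range (f ^ m * g))
  choose x hx using fun j ↦ mem_range.mp (b j).2
  have hz : ∀ j, (f ^ (m + 1)) (g (x j)) = 0 := fun j ↦ by
    rw [← Module.End.mul_apply, hfg, LinearMap.zero_apply]
  have hli : LinearIndependent K fun j ↦ (f ^ m) (g (x j)) := by
    have hb := b.linearIndependent.map' _ (ker_subtype _)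
    simp only [Function.comp_def, Submodule.subtype_apply, ← hx, Module.End.mul_apply] at hb
    exact hb
  have hle : span K (Set.range fun p : Fin (m + 1) × _ ↦ (f ^ (p.1 : ℕ)) (g (x p.2))) ≤
      ker (f ^ (m + 1)) :=
    span_le.mpr <| Set.range_subset_iff.mpr fun p ↦ pow_apply_mem_ker_pow f (hz p.2) p.1
  have := finrank_mono hle
  rwa [finrank_span_eq_card (linearIndependent_pow_apply f hz hli), Fintype.card_prod,
    Fintype.card_fin, Fintype.card_fin] at this

theorem natDegree_X_sub_C_pow_mul_X_sub_C {R : Type*} [CommRing R] [Nontrivial R] (a b : R)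
    (k : ℕ) : ((X - C a) ^ k * (X - C b)).natDegree = k + 1 := by
  rw [((monic_X_sub_C a).pow k).natDegree_mul (monic_X_sub_C b), (monic_X_sub_C a).natDegree_pow,
    natDegree_X_sub_C, natDegree_X_sub_C, mul_one]

theorem finrank_range_eq_one_of_minpoly_eq {K V : Type*} [Field K] [AddCommGroup V] [Module K V]
    [FiniteDimensional K V] (f : End K V) {a b : K} (hab : a ≠ b) {m : ℕ}
    (hmin : minpoly K f = (X - C a) ^ m * (X - C b)) (hdim : finrank K V ≤ 2 * m) :
    finrank K (range ((f - a • 1) ^ (m - 1) * (f - b • 1))) = 1 := by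
  have haeval : ∀ c : K, aeval f (X - C c) = f - c • 1 := fun c ↦ by
    rw [map_sub, aeval_X, aeval_C, Algebra.algebraMap_eq_smul_one]
  obtain ⟨v, hv⟩ : ∃ v, f.HasEigenvector b v :=
    (Module.End.hasEigenvalue_iff_isRoot.mpr (by simp [hmin])).exists_hasEigenvector
  have hker_ne_top : ker ((f - a • 1) ^ m) ≠ ⊤ := by
    intro htop
    have hv0 : ((f - a • 1) ^ m) v = 0 := by rw [← mem_ker, htop]; exact mem_top
    rw [← haeval, ← map_pow, Module.End.aeval_apply_of_hasEigenvector hv] at hv0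
    simp [sub_ne_zero.mpr hab.symm, hv.2] at hv0
  have hker_lt : finrank K (ker ((f - a • 1) ^ m)) < 2 * m :=
    (finrank_lt hker_ne_top).trans_le hdim
  obtain ⟨k, rfl⟩ : ∃ k, m = k + 1 := Nat.exists_eq_succ_of_ne_zero (by omega)
  have hannih : (f - a • 1) ^ (k + 1) * (f - b • 1) = 0 := by
    have := minpoly.aeval K f
    rwa [hmin, map_mul, map_pow, haeval, haeval] at this
  have hne : (f - a • 1) ^ k * (f - b • 1) ≠ 0 := by
    intro h0
    have hdvd := minpoly.dvd K f (p := (X - C a) ^ k * (X - C b))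
      (by rw [map_mul, map_pow, haeval, haeval, h0])
    have := natDegree_le_of_dvd hdvd ((monic_X_sub_C a).pow k |>.mul (monic_X_sub_C b)).ne_zero
    rw [hmin, natDegree_X_sub_C_pow_mul_X_sub_C, natDegree_X_sub_C_pow_mul_X_sub_C] at this
    omega
  have hpos : finrank K (range ((f - a • 1) ^ k * (f - b • 1))) ≠ 0 := by
    rwa [Ne, finrank_eq_zero, range_eq_bot]
  have hlt : finrank K (range ((f - a • 1) ^ k * (f - b • 1))) < 2 :=
    Nat.lt_of_mul_lt_mul_left (a := k + 1)
      (by linarith [mul_finrank_range_pow_mul_le_finrank_ker _ _ hannih])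
  rw [Nat.add_sub_cancel]
  omega

end

theorem rank_eq_one_of_minpoly_two_eigenvalues_general
    (F : Type*) [Field F] (n : ℕ)
    (A : Matrix (Fin n) (Fin n) F) (lam₁ lam₂ : F) (hne : lam₁ ≠ lam₂) (m : ℕ)
    (hmin : minpoly F A = (X - C lam₁) ^ m * (X - C lam₂)) (h : 2 * m ≥ n) :
    Matrix.rank ((A - lam₁ • (1 : Matrix (Fin n) (Fin n) F)) ^ (m - 1) *
      (A - lam₂ • (1 : Matrix (Fin n) (Fin n) F))) = 1 := by
  have hlin : ((A - lam₁ • 1) ^ (m - 1) * (A - lam₂ • 1)).mulVecLin =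
      (toLinAlgEquiv' A - lam₁ • 1) ^ (m - 1) * (toLinAlgEquiv' A - lam₂ • 1) := by
    rw [← map_one toLinAlgEquiv', ← map_smul, ← map_smul, ← map_sub, ← map_sub, ← map_pow,
      ← map_mul]
    rfl
  rw [Matrix.rank, hlin]
  exact finrank_range_eq_one_of_minpoly_eq _ hne (by rw [minpoly.algEquiv_eq, hmin])
    (by simpa using h)

theorem rank_eq_one_of_minpoly_two_eigenvalues
    (F : Type*) [Field F] [IsAlgClosed F] (n : ℕ)
    (A : Matrix (Fin n) (Fin n) F) (lam₁ lam₂ : F) (hne : lam₁ ≠ lam₂) (m : ℕ)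
    (hmin : minpoly F A = (X - C lam₁) ^ m * (X - C lam₂)) (h : 2 * m ≥ n) :
    Matrix.rank ((A - lam₁ • (1 : Matrix (Fin n) (Fin n) F)) ^ (m - 1) *
      (A - lam₂ • (1 : Matrix (Fin n) (Fin n) F))) = 1 :=
  rank_eq_one_of_minpoly_two_eigenvalues_general F n A lam₁ lam₂ hne m hmin h
end

section
/- Let F be an algebraically closed field and let A be an n×n matrix over F whose minimal polynomial has degree d with 2d > n. Then there exists an eigenvalue λ of A such that, writing a for the multiplicity of λ as a root of the minimal polynomial of A, one has rank((A − λ·I)^{a−1}) = rank((A − λ·I)^{a}) + 1 (i.e., λ has a unique Jordan block of maximal size). -/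
open Polynomial Module LinearMap Matrix

/-!
Write `g = A - λ` and `r k = rank (g ^ k)`. The drops `r k - r (k + 1) = dim (range g^k ⊓ ker g)`
are nonincreasing in `k`, and the drop at `k = a - 1` is positive because `(X - λ)^a` exactly
divides the minimal polynomial. If that drop were at least `2` for every eigenvalue, all `a` drops
before it would be too, so `dim ker g^a ≥ 2a`. As `ker g^a` lies in the generalized eigenspace,
`2a` is then at most the algebraic multiplicity of `λ`, and summing over the eigenvalues gives
`2d ≤ n`.
-/

namespace Polynomial

variable {R : Type*} [CommRing R] [IsDomain R]

theorem sum_rootMultiplicity_le_natDegree (p : R[X]) (s : Finset R) :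
    ∑ x ∈ s, p.rootMultiplicity x ≤ p.natDegree := by
  classical
  calc ∑ x ∈ s, p.rootMultiplicity x
      ≤ ∑ x ∈ s ∪ p.roots.toFinset, p.roots.count x := by
        simp only [count_roots]
        exact Finset.sum_le_sum_of_subset Finset.subset_union_left
    _ = p.roots.card := Multiset.sum_count_eq_card fun x hx => by simp [hx]
    _ ≤ p.natDegree := card_roots' p

theorem sum_rootMultiplicity_roots_toFinset_eq_natDegree {K : Type*} [Field K] [IsAlgClosed K]
    [DecidableEq K] (p : K[X]) :
    ∑ x ∈ p.roots.toFinset, p.rootMultiplicity x = p.natDegree := by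
  simp only [← count_roots, Multiset.toFinset_sum_count_eq, IsAlgClosed.card_roots_eq_natDegree]

end Polynomial

theorem Submodule.finrank_map_add_finrank_inf_ker_s8 {K V W : Type*} [Field K] [AddCommGroup V]
    [Module K V] [AddCommGroup W] [Module K W] [FiniteDimensional K V]
    (p : Submodule K V) (f : V →ₗ[K] W) :
    finrank K (p.map f) + finrank K (p ⊓ ker f : Submodule K V) = finrank K p := by
  have := (f.domRestrict p).finrank_range_add_finrank_ker
  rwa [range_domRestrict, ker_domRestrict, (p.equivSubtypeMap _).finrank_eq,
    Submodule.map_comap_subtype] at this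

namespace Module.End

variable {K V : Type*} [Field K] [AddCommGroup V] [Module K V] [FiniteDimensional K V]

theorem finrank_range_pow_succ_add_finrank_inf_ker (g : End K V) (k : ℕ) :
    finrank K (range (g ^ (k + 1))) + finrank K (range (g ^ k) ⊓ ker g : Submodule K V) =
      finrank K (range (g ^ k)) := by
  rw [pow_succ', mul_eq_comp, range_comp, Submodule.finrank_map_add_finrank_inf_ker_s8]

theorem antitone_finrank_range_pow_inf_ker (g : End K V) :
    Antitone fun k => finrank K (range (g ^ k) ⊓ ker g : Submodule K V) :=
  antitone_nat_of_succ_le fun k => Submodule.finrank_mono <|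
    inf_le_inf_right _ <| by rw [pow_succ]; exact range_comp_le_range _ _

theorem mul_le_finrank_ker_pow (g : End K V) {c a : ℕ}
    (h : c ≤ finrank K (range (g ^ (a - 1))) - finrank K (range (g ^ a))) :
    c * a ≤ finrank K (ker (g ^ a)) := by
  obtain rfl | ha := Nat.eq_zero_or_pos a
  · simp
  have hc : c ≤ finrank K (range (g ^ (a - 1)) ⊓ ker g : Submodule K V) := by
    have := g.finrank_range_pow_succ_add_finrank_inf_ker (a - 1)
    rw [Nat.sub_add_cancel ha] at this
    omega
  have hbound : ∀ k ≤ a, c * k + finrank K (range (g ^ k)) ≤ finrank K V := by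
    intro k hk
    induction k with
    | zero => simpa using (range (g ^ 0)).finrank_le
    | succ k ih =>
      have hstep := g.finrank_range_pow_succ_add_finrank_inf_ker k
      have hanti := g.antitone_finrank_range_pow_inf_ker (show k ≤ a - 1 by omega)
      have := ih (by omega)
      simp only at hanti
      rw [Nat.mul_succ]
      omega
  have := (g ^ a).finrank_range_add_finrank_ker
  have := hbound a le_rfl
  omega

theorem ker_pow_pred_rootMultiplicity_minpoly_lt (f : End K V) {μ : K}
    (hμ : (minpoly K f).IsRoot μ) :
    ker ((f - μ • 1) ^ ((minpoly K f).rootMultiplicity μ - 1)) <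
      ker ((f - μ • 1) ^ (minpoly K f).rootMultiplicity μ) := by
  set a := (minpoly K f).rootMultiplicity μ
  have hmin : minpoly K f ≠ 0 := minpoly.ne_zero (Algebra.IsIntegral.isIntegral f)
  have ha : 0 < a := (rootMultiplicity_pos hmin).mpr hμ
  have hmono : ker ((f - μ • 1) ^ (a - 1)) ≤ ker ((f - μ • 1) ^ a) := by
    simpa only [genEigenspace_nat] using
      (f.genEigenspace μ).monotone (Nat.cast_le.mpr (Nat.sub_le a 1))
  refine lt_of_le_not_ge hmono fun hle => ?_
  obtain ⟨q, hq⟩ := pow_rootMultiplicity_dvd (minpoly K f) μ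
  have hq0 : q ≠ 0 := by rintro rfl; exact hmin (by simpa using hq)
  have hX : aeval f (X - C μ) = f - μ • 1 := by simp [Algebra.algebraMap_eq_smul_one]
  -- `(X - μ)^(a-1) q` also annihilates `f`, contradicting the minimality of `minpoly`
  have hann : aeval f ((X - C μ) ^ (a - 1) * q) = 0 := by
    ext v
    have hv : aeval f q v ∈ ker ((f - μ • 1) ^ a) := by
      rw [mem_ker, ← mul_apply, ← hX, ← map_pow, ← map_mul, ← hq, minpoly.aeval,
        LinearMap.zero_apply]
    simpa [hX] using hle hv
  have hdvd := minpoly.dvd K f hann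
  rw [hq, mul_dvd_mul_iff_right hq0,
    pow_dvd_pow_iff (X_sub_C_ne_zero μ) (not_isUnit_X_sub_C μ)] at hdvd
  omega

theorem two_mul_rootMultiplicity_minpoly_le_charpoly (f : End K V) {μ : K}
    (hμ : (minpoly K f).IsRoot μ)
    (hne : finrank K (range ((f - μ • 1) ^ ((minpoly K f).rootMultiplicity μ - 1))) ≠
      finrank K (range ((f - μ • 1) ^ (minpoly K f).rootMultiplicity μ)) + 1) :
    2 * (minpoly K f).rootMultiplicity μ ≤ f.charpoly.rootMultiplicity μ := by
  set a := (minpoly K f).rootMultiplicity μ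
  set g := f - μ • 1
  have hlt : finrank K (ker (g ^ (a - 1))) < finrank K (ker (g ^ a)) :=
    Submodule.finrank_lt_finrank_of_lt (f.ker_pow_pred_rootMultiplicity_minpoly_lt hμ)
  have := (g ^ (a - 1)).finrank_range_add_finrank_ker
  have := (g ^ a).finrank_range_add_finrank_ker
  calc 2 * a ≤ finrank K (ker (g ^ a)) := g.mul_le_finrank_ker_pow (by omega)
    _ ≤ f.charpoly.rootMultiplicity μ := by
      rw [← genEigenspace_nat]; exact f.finrank_genEigenspace_le μ a

theorem exists_mem_spectrum_finrank_range_pow_pred_rootMultiplicity_eq [IsAlgClosed K]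
    (f : End K V) (h : finrank K V < 2 * (minpoly K f).natDegree) :
    ∃ μ ∈ spectrum K f,
      finrank K (range ((f - μ • 1) ^ ((minpoly K f).rootMultiplicity μ - 1))) =
        finrank K (range ((f - μ • 1) ^ (minpoly K f).rootMultiplicity μ)) + 1 := by
  classical
  by_contra! hne
  have hmin : minpoly K f ≠ 0 := minpoly.ne_zero (Algebra.IsIntegral.isIntegral f)
  have hroots : ∀ μ ∈ (minpoly K f).roots.toFinset,
      2 * (minpoly K f).rootMultiplicity μ ≤ f.charpoly.rootMultiplicity μ := by
    intro μ hμ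
    rw [Multiset.mem_toFinset, mem_roots hmin] at hμ
    exact f.two_mul_rootMultiplicity_minpoly_le_charpoly hμ
      (hne μ (hasEigenvalue_iff_mem_spectrum.mp (hasEigenvalue_of_isRoot hμ)))
  have : 2 * (minpoly K f).natDegree ≤ finrank K V :=
    calc 2 * (minpoly K f).natDegree
        = ∑ μ ∈ (minpoly K f).roots.toFinset, 2 * (minpoly K f).rootMultiplicity μ := by
          rw [← Finset.mul_sum, sum_rootMultiplicity_roots_toFinset_eq_natDegree]
      _ ≤ ∑ μ ∈ (minpoly K f).roots.toFinset, f.charpoly.rootMultiplicity μ :=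
          Finset.sum_le_sum hroots
      _ ≤ f.charpoly.natDegree := sum_rootMultiplicity_le_natDegree _ _
      _ = finrank K V := f.charpoly_natDegree
  omega

end Module.End

theorem exists_eigenvalue_unique_maximal_jordan_block
    (F : Type*) [Field F] [IsAlgClosed F] (n : ℕ)
    (A : Matrix (Fin n) (Fin n) F) (d : ℕ)
    (hd : (minpoly F A).natDegree = d) (h : 2 * d > n) :
    ∃ lam ∈ spectrum F A,
      Matrix.rank ((A - lam • (1 : Matrix (Fin n) (Fin n) F)) ^
          ((minpoly F A).rootMultiplicity lam - 1)) =
        Matrix.rank ((A - lam • (1 : Matrix (Fin n) (Fin n) F)) ^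
          (minpoly F A).rootMultiplicity lam) + 1 := by
  have hrank (μ : F) (k : ℕ) : ((A - μ • 1) ^ k).rank =
      finrank F (range ((toLinAlgEquiv' A - μ • 1) ^ k)) := by
    have hlin : ((A - μ • 1) ^ k).mulVecLin = (toLinAlgEquiv' A - μ • 1) ^ k := by
      change toLinAlgEquiv' ((A - μ • 1) ^ k) = _
      rw [map_pow, map_sub, map_smul, map_one]
    rw [Matrix.rank, hlin]
  have hmin : minpoly F (toLinAlgEquiv' A) = minpoly F A := minpoly.algEquiv_eq _ A
  obtain ⟨μ, hμ, heq⟩ :=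
    Module.End.exists_mem_spectrum_finrank_range_pow_pred_rootMultiplicity_eq (toLinAlgEquiv' A)
      (by rwa [finrank_fin_fun, hmin, hd])
  refine ⟨μ, by rwa [← AlgEquiv.spectrum_eq toLinAlgEquiv' A], ?_⟩
  rwa [hrank, hrank, ← hmin]
end

section
/- Let F be an algebraically closed field and let A be an n×n matrix over F whose minimal polynomial has degree d with 2d ≤ n ≤ 3d − 1. Then there exists a polynomial p ∈ F[X] of degree at most d − 1 such that 1 ≤ rank(p(A)) ≤ 2. -/
/-! For a root `a` of the minimal polynomial `μ` of multiplicity `m`, the space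
`ker (A - a) ⊓ range ((A - a) ^ (m - 1))` is spanned by the tops of the Jordan blocks of maximal
size `m`, and each such block contributes `m` dimensions to the generalized eigenspace of `a`.
If every root had at least three maximal blocks, the generalized eigenspaces would have total
dimension at least `3 d > n`. So some root `a` has at most two, and `p = μ / (X - a)` works:
`p(A) ≠ 0` because `deg p < d`, and `range p(A) ⊆ ker (A - a) ⊓ range ((A - a) ^ (m - 1))`. -/

open Polynomial Matrix Module LinearMap

theorem Polynomial.sum_rootMultiplicity_le_natDegree_s10 {R : Type*} [CommRing R] [IsDomain R]
    (p : R[X]) (s : Finset R) : ∑ a ∈ s, p.rootMultiplicity a ≤ p.natDegree := by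
  classical
  calc ∑ a ∈ s, p.rootMultiplicity a = ∑ a ∈ s, p.roots.count a := by simp only [count_roots]
    _ ≤ ∑ a ∈ s ∪ p.roots.toFinset, p.roots.count a :=
      Finset.sum_le_sum_of_subset Finset.subset_union_left
    _ = Multiset.card p.roots := Multiset.sum_count_eq_card fun a ha => by simp [ha]
    _ ≤ p.natDegree := card_roots' p

namespace Module.End

variable {K V : Type*} [Field K] [AddCommGroup V] [Module K V] [FiniteDimensional K V]

theorem finrank_ker_pow_succ (N : End K V) (j : ℕ) :
    finrank K (ker (N ^ (j + 1))) =
      finrank K (ker (N ^ j)) + finrank K ↥(ker N ⊓ range (N ^ j)) := by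
  let g := (N ^ j).domRestrict (ker (N ^ (j + 1)))
  have hrange : range g = ker N ⊓ range (N ^ j) := by
    ext x
    simp only [g, range_domRestrict, Submodule.mem_map, mem_ker, Submodule.mem_inf, mem_range,
      pow_succ', mul_apply]
    constructor
    · rintro ⟨y, hy, rfl⟩
      exact ⟨hy, y, rfl⟩
    · rintro ⟨hx, y, rfl⟩
      exact ⟨y, hx, rfl⟩
  have hle : ker (N ^ j) ≤ ker (N ^ (j + 1)) := by
    intro x hx
    simp_all [pow_succ']
  have hker : ker g = Submodule.comap (ker (N ^ (j + 1))).subtype (ker (N ^ j)) := by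
    ext x
    simp [g]
  have := finrank_range_add_finrank_ker g
  rw [hrange, hker, (Submodule.comapSubtypeEquivOfLe hle).finrank_eq] at this
  omega

theorem mul_finrank_inf_range_pow_le_finrank_ker_pow (N : End K V) {k : ℕ} :
    ∀ m ≤ k + 1, m * finrank K ↥(ker N ⊓ range (N ^ k)) ≤ finrank K (ker (N ^ m))
  | 0, _ => by simp
  | m + 1, hm => by
    have hmono : finrank K ↥(ker N ⊓ range (N ^ k)) ≤ finrank K ↥(ker N ⊓ range (N ^ m)) := by
      refine Submodule.finrank_mono (inf_le_inf_left _ ?_)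
      rw [show k = m + (k - m) by omega, pow_add, mul_eq_comp]
      exact range_comp_le_range _ _
    have := mul_finrank_inf_range_pow_le_finrank_ker_pow N (k := k) m (by omega)
    rw [finrank_ker_pow_succ, add_mul, one_mul]
    omega

theorem sum_finrank_genEigenspace_le (f : End K V) (s : Finset K) (k : K → ℕ) :
    ∑ a ∈ s, finrank K (f.genEigenspace a (k a)) ≤ finrank K V :=
  calc ∑ a ∈ s, finrank K (f.genEigenspace a (k a))
      ≤ ∑ a ∈ s, f.charpoly.rootMultiplicity a :=
        Finset.sum_le_sum fun a _ => finrank_genEigenspace_le f a (k a)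
    _ ≤ f.charpoly.natDegree := sum_rootMultiplicity_le_natDegree_s10 _ _
    _ = finrank K V := charpoly_natDegree f

theorem exists_mem_roots_minpoly_finrank_inf_range_le (f : End K V)
    (hsplit : (minpoly K f).Splits) {c : ℕ}
    (hV : finrank K V < (c + 1) * (minpoly K f).natDegree) :
    ∃ a ∈ (minpoly K f).roots, finrank K ↥(ker (f - a • 1) ⊓
      range ((f - a • 1) ^ ((minpoly K f).rootMultiplicity a - 1))) ≤ c := by
  classical
  set μ := minpoly K f
  by_contra! h
  have hroot : ∀ a ∈ μ.roots.toFinset,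
      (c + 1) * μ.rootMultiplicity a ≤ finrank K (f.genEigenspace a (μ.rootMultiplicity a)) := by
    intro a ha
    rw [genEigenspace_nat, mul_comm]
    exact (Nat.mul_le_mul_left _ (h a (Multiset.mem_toFinset.mp ha))).trans
      (mul_finrank_inf_range_pow_le_finrank_ker_pow _ _ (by omega))
  have : (c + 1) * μ.natDegree ≤ finrank K V :=
    calc (c + 1) * μ.natDegree = ∑ a ∈ μ.roots.toFinset, (c + 1) * μ.rootMultiplicity a := by
          rw [← Finset.mul_sum, hsplit.natDegree_eq_card_roots, ← Multiset.toFinset_sum_count_eq]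
          simp only [count_roots]
      _ ≤ ∑ a ∈ μ.roots.toFinset, finrank K (f.genEigenspace a (μ.rootMultiplicity a)) :=
          Finset.sum_le_sum hroot
      _ ≤ finrank K V := f.sum_finrank_genEigenspace_le _ _
  omega

theorem exists_poly_finrank_range_aeval_le_of_finrank_lt (f : End K V)
    (hsplit : (minpoly K f).Splits) {c : ℕ}
    (hV : finrank K V < (c + 1) * (minpoly K f).natDegree) :
    ∃ p : K[X], p.natDegree + 1 = (minpoly K f).natDegree ∧
      0 < finrank K (range (aeval f p)) ∧ finrank K (range (aeval f p)) ≤ c := by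
  obtain ⟨a, ha, hc⟩ := f.exists_mem_roots_minpoly_finrank_inf_range_le hsplit hV
  set μ := minpoly K f
  set m := μ.rootMultiplicity a
  obtain ⟨q, hq⟩ := μ.pow_rootMultiplicity_dvd a
  have hμ0 : μ ≠ 0 := minpoly.ne_zero (Algebra.IsIntegral.isIntegral f)
  have hm : 0 < m := (rootMultiplicity_pos hμ0).mpr (isRoot_of_mem_roots ha)
  set p := (X - C a) ^ (m - 1) * q
  have hμp : μ = (X - C a) * p := by
    rw [← mul_assoc, ← pow_succ', Nat.sub_add_cancel hm, ← hq]
  have hp0 : p ≠ 0 := right_ne_zero_of_mul (hμp ▸ hμ0)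
  have hdeg : p.natDegree + 1 = μ.natDegree := by
    rw [hμp, natDegree_mul (X_sub_C_ne_zero a) hp0, natDegree_X_sub_C, add_comm]
  have haeval : aeval f (X - C a) = f - a • 1 := by
    simp [Algebra.algebraMap_eq_smul_one]
  refine ⟨p, hdeg, ?_, le_trans (Submodule.finrank_mono ?_) hc⟩
  · rw [Nat.pos_iff_ne_zero, Ne, Submodule.finrank_eq_zero, range_eq_bot]
    intro hp
    have : μ.natDegree ≤ p.natDegree :=
      natDegree_le_natDegree (minpoly.degree_le_of_ne_zero K f hp0 hp)
    omega
  · rintro _ ⟨v, rfl⟩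
    refine ⟨?_, aeval f q v, ?_⟩
    · rw [SetLike.mem_coe, mem_ker, ← haeval, ← mul_apply, ← map_mul, ← hμp, minpoly.aeval,
        LinearMap.zero_apply]
    · rw [map_mul, map_pow, haeval, mul_apply]

end Module.End

theorem exists_poly_rank_le_two_of_minpoly_deg_between_general
    (F : Type*) [Field F] [IsAlgClosed F] (n : ℕ)
    (A : Matrix (Fin n) (Fin n) F) (d : ℕ)
    (hd : (minpoly F A).natDegree = d) (h2 : n + 1 ≤ 3 * d) :
    ∃ p : F[X], p.natDegree ≤ d - 1 ∧
      1 ≤ Matrix.rank (Polynomial.aeval A p) ∧ Matrix.rank (Polynomial.aeval A p) ≤ 2 := by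
  obtain ⟨p, hdeg, hpos, hle⟩ :=
    End.exists_poly_finrank_range_aeval_le_of_finrank_lt (toLin' A) (IsAlgClosed.splits _)
      (c := 2) (by rw [minpoly_toLin', hd, finrank_fin_fun]; omega)
  have hrank : (aeval A p).rank = finrank F (range (aeval (toLin' A) p)) := by
    rw [Matrix.rank, ← toLin'_apply']
    exact congrArg (fun g => finrank F (range g)) (aeval_algHom_apply toLinAlgEquiv' A p).symm
  rw [minpoly_toLin', hd] at hdeg
  exact ⟨p, by omega, by omega, by omega⟩

theorem exists_poly_rank_le_two_of_minpoly_deg_between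
    (F : Type*) [Field F] [IsAlgClosed F] (n : ℕ)
    (A : Matrix (Fin n) (Fin n) F) (d : ℕ)
    (hd : (minpoly F A).natDegree = d) (h1 : 2 * d ≤ n) (h2 : n + 1 ≤ 3 * d) :
    ∃ p : F[X], p.natDegree ≤ d - 1 ∧
      1 ≤ Matrix.rank (Polynomial.aeval A p) ∧ Matrix.rank (Polynomial.aeval A p) ≤ 2 :=
  exists_poly_rank_le_two_of_minpoly_deg_between_general F n A d hd h2
end

section
/- Let A be a finite-dimensional unital associative algebra over a field F, let a₁, …, a_k ∈ A be such that S = {a₁, …, a_k} is a generating system of A, and let C = (c_{ij}) ∈ M_k(F) be an invertible matrix. Set S_C = {c_{11}a₁ + c_{12}a₂ + ⋯ + c_{1k}a_k, …, c_{k1}a₁ + c_{k2}a₂ + ⋯ + c_{kk}a_k}. Then S_C is a generating system of A and ℓ(S_C) = ℓ(S). -/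
/-!
Every element of the new system `S_C` is a linear combination of `S`, and since `C` is
invertible every element of `S` is a linear combination of `S_C`; so both systems span the same
subspace `V`. Because multiplication is bilinear, a product of `i` elements of `V` lies in the span
of the words of length `i` over either system, hence the two systems have the same word spans
`L_i` for every `i`, and therefore the same generating property and the same length.
-/

open Polynomial Matrix

/-- The `F`-linear span of all words over `S` of length at most `i`
(the empty word being `1`). -/
def wordSpan (F : Type*) {A : Type*} [Field F] [Ring A] [Algebra F A]
    (S : Set A) (i : ℕ) : Submodule F A :=
  Submodule.span F {x : A | ∃ l : List A, l.length ≤ i ∧ (∀ a ∈ l, a ∈ S) ∧ l.prod = x}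

/-- `S` is a generating system of the algebra `A`:
`A` is the union of the subspaces `wordSpan F S i`. -/
def IsGeneratingSystem (F : Type*) {A : Type*} [Field F] [Ring A] [Algebra F A]
    (S : Set A) : Prop :=
  ∀ x : A, ∃ i : ℕ, x ∈ wordSpan F S i

/-- The length of a generating system `S`: the least `k` with `wordSpan F S k = ⊤`. -/
noncomputable def genLength (F : Type*) {A : Type*} [Field F] [Ring A] [Algebra F A]
    (S : Set A) : ℕ :=
  sInf {k : ℕ | wordSpan F S k = ⊤}

open Submodule

section WordSpan

variable {F A : Type*} [Field F] [Ring A] [Algebra F A]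

lemma wordSpan_mono {S : Set A} {i j : ℕ} (h : i ≤ j) : wordSpan F S i ≤ wordSpan F S j :=
  span_mono fun _ ⟨l, hl, hmem, hprod⟩ => ⟨l, hl.trans h, hmem, hprod⟩

lemma span_mul_wordSpan_le (S : Set A) (n : ℕ) :
    span F S * wordSpan F S n ≤ wordSpan F S (n + 1) := by
  rw [wordSpan, span_mul_span]
  refine span_mono ?_
  rintro _ ⟨s, hs, _, ⟨l, hl, hmem, rfl⟩, rfl⟩
  exact ⟨s :: l, by simpa using hl, List.forall_mem_cons.mpr ⟨hs, hmem⟩, List.prod_cons⟩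

lemma list_prod_mem_wordSpan {S : Set A} {l : List A} (hl : ∀ x ∈ l, x ∈ span F S) :
    l.prod ∈ wordSpan F S l.length := by
  induction l with
  | nil => exact subset_span ⟨[], le_rfl, by simp, rfl⟩
  | cons x l ih =>
    rw [List.forall_mem_cons] at hl
    exact span_mul_wordSpan_le S l.length (mul_mem_mul hl.1 (ih hl.2))

lemma wordSpan_le_of_subset_span {S T : Set A} (h : T ⊆ span F S) (n : ℕ) :
    wordSpan F T n ≤ wordSpan F S n :=
  span_le.mpr fun _ ⟨_, hl, hmem, hprod⟩ =>
    hprod ▸ wordSpan_mono hl (list_prod_mem_wordSpan fun x hx => h (hmem x hx))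

lemma wordSpan_eq_of_span_eq {S T : Set A} (h : span F S = span F T) (n : ℕ) :
    wordSpan F S n = wordSpan F T n :=
  le_antisymm (wordSpan_le_of_subset_span (subset_span.trans (SetLike.coe_mono h.le)) n)
    (wordSpan_le_of_subset_span (subset_span.trans (SetLike.coe_mono h.ge)) n)

lemma isGeneratingSystem_iff_of_span_eq {S T : Set A} (h : span F S = span F T) :
    IsGeneratingSystem F S ↔ IsGeneratingSystem F T := by
  simp only [IsGeneratingSystem, wordSpan_eq_of_span_eq h]

lemma genLength_eq_of_span_eq {S T : Set A} (h : span F S = span F T) :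
    genLength F S = genLength F T := by
  simp only [genLength, wordSpan_eq_of_span_eq h]

end WordSpan

section MatrixCombination

variable {R M ι : Type*} [CommRing R] [AddCommGroup M] [Module R M] [Fintype ι]

lemma span_range_sum_smul_le (C : Matrix ι ι R) (v : ι → M) :
    span R (Set.range fun i => ∑ j, C i j • v j) ≤ span R (Set.range v) :=
  span_le.mpr <| Set.range_subset_iff.mpr fun _ =>
    sum_mem fun j _ => smul_mem _ _ (subset_span ⟨j, rfl⟩)

lemma sum_smul_sum_smul_eq_mul (D C : Matrix ι ι R) (v : ι → M) (i : ι) :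
    ∑ j, D i j • ∑ m, C j m • v m = ∑ m, (D * C) i m • v m := by
  simp only [Matrix.mul_apply, Finset.smul_sum, Finset.sum_smul, mul_smul]
  exact Finset.sum_comm

lemma span_range_sum_smul_of_isUnit [DecidableEq ι] {C : Matrix ι ι R} (hC : IsUnit C)
    (v : ι → M) : span R (Set.range fun i => ∑ j, C i j • v j) = span R (Set.range v) := by
  have := hC.invertible
  refine le_antisymm (span_range_sum_smul_le C v) ?_
  calc span R (Set.range v)
      = span R (Set.range fun i => ∑ j, (⅟C) i j • ∑ m, C j m • v m) := by
        simp only [sum_smul_sum_smul_eq_mul, invOf_mul_self, Matrix.one_apply, ite_smul,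
          one_smul, zero_smul, Finset.sum_ite_eq, Finset.mem_univ, if_true]
    _ ≤ span R (Set.range fun j => ∑ m, C j m • v m) := span_range_sum_smul_le _ _

end MatrixCombination

theorem genLength_invariant_under_invertible_transform_general
    (F : Type*) [Field F] (A : Type*) [Ring A] [Algebra F A]
    (k : ℕ) (a : Fin k → A)
    (hgen : IsGeneratingSystem F (Set.range a))
    (C : Matrix (Fin k) (Fin k) F) (hC : IsUnit C) :
    IsGeneratingSystem F (Set.range fun i => ∑ j, C i j • a j) ∧
      genLength F (Set.range fun i => ∑ j, C i j • a j) = genLength F (Set.range a) := by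
  have hspan := span_range_sum_smul_of_isUnit hC a
  exact ⟨(isGeneratingSystem_iff_of_span_eq hspan).mpr hgen, genLength_eq_of_span_eq hspan⟩

theorem genLength_invariant_under_invertible_transform
    (F : Type*) [Field F] (A : Type*) [Ring A] [Algebra F A] [FiniteDimensional F A]
    (k : ℕ) (a : Fin k → A)
    (hgen : IsGeneratingSystem F (Set.range a))
    (C : Matrix (Fin k) (Fin k) F) (hC : IsUnit C) :
    IsGeneratingSystem F (Set.range fun i => ∑ j, C i j • a j) ∧
      genLength F (Set.range fun i => ∑ j, C i j • a j) = genLength F (Set.range a) :=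
  genLength_invariant_under_invertible_transform_general F A k a hgen C hC
end

section
/- Let A be a finite-dimensional unital associative algebra over a field F, and let a₁, …, a_k ∈ A be such that S = {a₁, …, a_k} is a generating system of A and the identity 1_A does not lie in the F-linear span of a₁, …, a_k. Then for any scalars γ₁, …, γ_k ∈ F, the set S₁ = {a₁ + γ₁·1_A, …, a_k + γ_k·1_A} is a generating system of A and ℓ(S₁) = ℓ(S). -/
/-
The empty word `1` lies in every `wordSpan F S i`, so each shifted generator `a i + γ i • 1`
lies in `wordSpan F S 1`, and conversely each `a i` lies in the first word span of the shifted
system. A product of `n` elements of `wordSpan F S 1` lies in `wordSpan F S n`, so the two systems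
have the same word spans in every degree, hence the same union and the same length.
-/

open Polynomial Matrix

namespace wordSpan

variable {F A : Type*} [Field F] [Ring A] [Algebra F A] {S T : Set A}

theorem one_mem (i : ℕ) : (1 : A) ∈ wordSpan F S i :=
  Submodule.subset_span ⟨[], by simp⟩

theorem subset_one : S ⊆ wordSpan F S 1 := fun x hx =>
  Submodule.subset_span ⟨[x], by simp, by simpa, by simp⟩

theorem mono {i j : ℕ} (h : i ≤ j) : wordSpan F S i ≤ wordSpan F S j :=
  Submodule.span_mono fun _ ⟨l, hl, hS, hp⟩ => ⟨l, hl.trans h, hS, hp⟩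

theorem mul_le (i j : ℕ) : wordSpan F S i * wordSpan F S j ≤ wordSpan F S (i + j) := by
  rw [wordSpan, wordSpan, Submodule.span_mul_span, Submodule.span_le]
  rintro _ ⟨_, ⟨l₁, hl₁, hS₁, rfl⟩, _, ⟨l₂, hl₂, hS₂, rfl⟩, rfl⟩
  refine Submodule.subset_span ⟨l₁ ++ l₂, by simpa using Nat.add_le_add hl₁ hl₂, ?_, by simp⟩
  simpa only [List.mem_append, or_imp, forall_and] using ⟨hS₁, hS₂⟩

theorem list_prod_mem {l : List A} (hl : ∀ x ∈ l, x ∈ wordSpan F S 1) :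
    l.prod ∈ wordSpan F S l.length := by
  induction l with
  | nil => exact one_mem 0
  | cons x l ih =>
    rw [List.prod_cons, List.length_cons, Nat.add_comm]
    exact mul_le 1 l.length <| Submodule.mul_mem_mul (hl x (by simp))
      (ih fun y hy => hl y (List.mem_cons_of_mem x hy))

theorem le_of_subset_wordSpan_one (h : T ⊆ wordSpan F S 1) (i : ℕ) :
    wordSpan F T i ≤ wordSpan F S i := by
  rw [wordSpan, Submodule.span_le]
  rintro _ ⟨l, hl, hT, rfl⟩
  exact mono hl (list_prod_mem fun x hx => h (hT x hx))

theorem range_add_smul_one {ι : Type*} (a : ι → A) (γ : ι → F) :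
    wordSpan F (Set.range fun i => a i + γ i • (1 : A)) = wordSpan F (Set.range a) := by
  funext n
  refine le_antisymm (le_of_subset_wordSpan_one ?_ n) (le_of_subset_wordSpan_one ?_ n)
  · rintro _ ⟨i, rfl⟩
    exact add_mem (subset_one ⟨i, rfl⟩) (Submodule.smul_mem _ _ (one_mem 1))
  · rintro _ ⟨i, rfl⟩
    rw [← add_neg_cancel_right (a i) (γ i • (1 : A)), ← neg_smul]
    exact add_mem (subset_one ⟨i, rfl⟩) (Submodule.smul_mem _ _ (one_mem 1))

end wordSpan

theorem genLength_invariant_under_unit_shift_general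
    (F : Type*) [Field F] (A : Type*) [Ring A] [Algebra F A]
    (k : ℕ) (a : Fin k → A)
    (hgen : IsGeneratingSystem F (Set.range a))
    (γ : Fin k → F) :
    IsGeneratingSystem F (Set.range fun i => a i + γ i • (1 : A)) ∧
      genLength F (Set.range fun i => a i + γ i • (1 : A)) = genLength F (Set.range a) := by
  have hspan := wordSpan.range_add_smul_one a γ
  constructor
  · unfold IsGeneratingSystem
    rwa [hspan]
  · unfold genLength
    rw [hspan]

theorem genLength_invariant_under_unit_shift
    (F : Type*) [Field F] (A : Type*) [Ring A] [Algebra F A] [FiniteDimensional F A]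
    (k : ℕ) (a : Fin k → A)
    (hgen : IsGeneratingSystem F (Set.range a))
    (h1 : (1 : A) ∉ Submodule.span F (Set.range a))
    (γ : Fin k → F) :
    IsGeneratingSystem F (Set.range fun i => a i + γ i • (1 : A)) ∧
      genLength F (Set.range fun i => a i + γ i • (1 : A)) = genLength F (Set.range a) :=
  genLength_invariant_under_unit_shift_general F A k a hgen γ
end

section
/- Let F be a field and let S be a finite generating system of the full matrix algebra M_n(F). If for some k ≥ 1 the subspace L_k(S) contains a matrix of rank r with r > 0, then ℓ(S) ≤ r·n + n − r + k − 1. -/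
open Polynomial Matrix

/-!
Write `P = 1 ⊔ span S`, so that `L_i(S) = P ^ i`. A chain of subspaces `X_{j+1} = g X_j` that fails
to grow once is constant from then on, so it gains a dimension at every step until it reaches its
limit. For the chain `M · P ^ j`, whose limit `M · A` has dimension at most `n r`, this gives
`M · A ⊆ L_{k + rn - 1}`; for the chain `P ^ s • col(M)` of column spaces, which starts in dimension
`r`, it gives `P ^ (n - r) • col(M) = Fⁿ`. Every matrix is a sum of matrices `b eⱼᵀ` with such
columns `b`, hence lies in `P ^ (n - r) · M · A ⊆ L_{rn + n - r + k - 1}`.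
-/

open Submodule Module

section WordSpan

variable {F A : Type*} [Field F] [Ring A] [Algebra F A]

theorem wordSpan_succ (S : Set A) (i : ℕ) :
    wordSpan F S (i + 1) = (1 ⊔ span F S) * wordSpan F S i := by
  rw [wordSpan, wordSpan, one_eq_span, ← span_union, span_mul_span]
  congr 1
  ext x
  simp only [Set.mem_ofPred_eq, Set.mem_mul, Set.mem_union, Set.mem_singleton_iff]
  constructor
  · rintro ⟨_ | ⟨a, l⟩, hl, hS, rfl⟩
    · exact ⟨1, Or.inl rfl, 1, ⟨[], by simp, by simp, rfl⟩, mul_one 1⟩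
    · exact ⟨a, Or.inr (hS a (by simp)), l.prod,
        ⟨l, by simpa using hl, fun b hb => hS b (by simp [hb]), rfl⟩, rfl⟩
  · rintro ⟨a, ha | ha, _, ⟨l, hl, hS, rfl⟩, rfl⟩
    · exact ⟨l, by omega, hS, by simp [ha]⟩
    · exact ⟨a :: l, by simpa using hl, by simpa [ha] using hS, rfl⟩

theorem wordSpan_eq_pow (S : Set A) (i : ℕ) : wordSpan F S i = (1 ⊔ span F S) ^ i := by
  induction i with
  | zero =>
    rw [pow_zero, one_eq_span (R := F), wordSpan]
    congr 1
    ext x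
    simp [eq_comm]
  | succ i ih => rw [wordSpan_succ, ih, pow_succ']

theorem IsGeneratingSystem.iSup_pow_eq_top {S : Set A} (h : IsGeneratingSystem F S) :
    ⨆ i, (1 ⊔ span F S) ^ i = ⊤ :=
  eq_top_iff.2 fun x _ =>
    let ⟨i, hi⟩ := h x
    mem_iSup_of_mem i (wordSpan_eq_pow (F := F) S i ▸ hi)

end WordSpan

section Chain

variable {F V : Type*} [Field F] [AddCommGroup V] [Module F V]
  {f : ℕ → Submodule F V} {g : Submodule F V → Submodule F V}

theorem Monotone.eq_iSup_of_succ_eq (hf : Monotone f) (hg : ∀ j, f (j + 1) = g (f j)) {j : ℕ}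
    (hj : f (j + 1) = f j) : f j = ⨆ i, f i := by
  have hconst : ∀ m, f (j + m) = f j := by
    intro m
    induction m with
    | zero => rfl
    | succ m ih => rw [← add_assoc, hg, ih, ← hg, hj]
  exact le_antisymm (le_iSup f j) (iSup_le fun i => (hconst i) ▸ hf (Nat.le_add_left i j))

theorem Monotone.eq_iSup_of_finrank_le [FiniteDimensional F V] (hf : Monotone f)
    (hg : ∀ j, f (j + 1) = g (f j)) {d : ℕ}
    (hd : finrank F ↥(⨆ i, f i) ≤ finrank F (f 0) + d) : f d = ⨆ i, f i := by
  have key : ∀ m, f m = ⨆ i, f i ∨ finrank F (f 0) + m ≤ finrank F (f m) := by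
    intro m
    induction m with
    | zero => exact Or.inr le_rfl
    | succ m ih =>
      rcases ih with h | h
      · exact Or.inl (le_antisymm (le_iSup f _) (h ▸ hf (m.le_add_right 1)))
      · by_cases hstable : f (m + 1) = f m
        · exact Or.inl (hstable ▸ hf.eq_iSup_of_succ_eq hg hstable)
        · have hlt := lt_of_le_of_ne (hf (m.le_add_right 1)) (Ne.symm hstable)
          have := finrank_lt_finrank_of_lt hlt
          exact Or.inr (by omega)
  exact (key d).elim id fun h => eq_of_le_of_finrank_le (le_iSup f d) (hd.trans h)

end Chain

section PowerChain

variable {F A : Type*} [Field F] [Ring A] [Algebra F A] {P : Submodule F A}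

theorem Submodule.pow_smul_eq_top_smul {V : Type*} [AddCommGroup V] [Module F V]
    [FiniteDimensional F V] [Module A V] [IsScalarTower F A V] (hP1 : 1 ≤ P) (hP : ⨆ i, P ^ i = ⊤)
    (N : Submodule F V) {d : ℕ} (hd : finrank F ↥((⊤ : Submodule F A) • N) ≤ finrank F N + d) :
    P ^ d • N = (⊤ : Submodule F A) • N := by
  have hf : Monotone fun j => P ^ j • N := fun _ _ hij =>
    smul_mono_left (pow_right_monotone hP1 hij)
  have hsup : ⨆ j, P ^ j • N = (⊤ : Submodule F A) • N := by rw [← iSup_smul, hP]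
  rw [← hsup]
  refine hf.eq_iSup_of_finrank_le (g := (P • ·))
    (fun j => (pow_succ' P j).symm ▸ Submodule.smul_assoc P (P ^ j) N) ?_
  rwa [hsup, pow_zero, Submodule.one_smul]

theorem Submodule.mul_pow_eq_mul_top [FiniteDimensional F A] (hP1 : 1 ≤ P) (hP : ⨆ i, P ^ i = ⊤)
    (N : Submodule F A) {d : ℕ} (hd : finrank F ↥(N * ⊤) ≤ finrank F N + d) :
    N * P ^ d = N * ⊤ := by
  have hf : Monotone fun j => N * P ^ j := fun _ _ hij =>
    mul_le_mul_right (pow_right_monotone hP1 hij) N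
  have hsup : ⨆ j, N * P ^ j = N * ⊤ := by rw [← mul_iSup, hP]
  rw [← hsup]
  refine hf.eq_iSup_of_finrank_le (g := (· * P)) (fun j => by simp only [pow_succ, mul_assoc]) ?_
  rwa [hsup, pow_zero, mul_one]

end PowerChain

namespace Matrix

variable {n F : Type*} [Fintype n] [DecidableEq n] [Field F]

theorem sum_vecMulVec_col_single {m R : Type*} [Semiring R] (B : Matrix m n R) :
    ∑ j, vecMulVec (B.col j) (Pi.single j 1) = B := by
  ext i k
  simp [sum_apply, vecMulVec_apply, Pi.single_apply]

theorem finrank_span_singleton_mul_top_le (M : Matrix n n F) :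
    finrank F ↥(span F {M} * ⊤) ≤ Fintype.card n * M.rank := by
  set C := LinearMap.range M.mulVecLin
  have hcols : (span F {M} * ⊤).map (transposeLinearEquiv n n F F).toLinearMap ≤
      LinearMap.range ((ofLinearEquiv F).toLinearMap ∘ₗ C.subtype.compLeft n) := by
    rintro _ ⟨_, hX, rfl⟩
    obtain ⟨X, -, rfl⟩ := mem_span_singleton_mul.1 hX
    exact ⟨fun j => ⟨M *ᵥ X.col j, X.col j, rfl⟩, by ext j i; simp [mulVec, dotProduct, mul_apply]⟩
  calc finrank F ↥(span F {M} * ⊤)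
      = finrank F ↥((span F {M} * ⊤).map (transposeLinearEquiv n n F F).toLinearMap) :=
        (LinearEquiv.finrank_map_eq _ _).symm
    _ ≤ finrank F (n → C) := (Submodule.finrank_mono hcols).trans (LinearMap.finrank_range_le _)
    _ = Fintype.card n * M.rank := by simp [finrank_pi_fintype, rank, C]

theorem vecMulVec_mem_mul_of_mem_smul {R : Type*} [CommSemiring R] {Q : Submodule R (Matrix n n R)}
    {M : Matrix n n R} {b : n → R} (hb : b ∈ Q • LinearMap.range M.mulVecLin) (w : n → R) :
    vecMulVec b w ∈ Q * (span R {M} * ⊤) := by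
  refine smul_induction_on hb (fun Y hY _ ⟨u, hu⟩ => ?_) fun b c hb hc => ?_
  · rw [← hu]
    change vecMulVec (Y *ᵥ (M *ᵥ u)) w ∈ _
    rw [← mul_vecMulVec, ← mul_vecMulVec]
    exact mul_mem_mul hY (mul_mem_mul (mem_span_singleton_self M) mem_top)
  · rw [add_vecMulVec]
    exact add_mem hb hc

theorem mul_span_singleton_mul_top_eq_top {R : Type*} [CommSemiring R]
    {Q : Submodule R (Matrix n n R)} {M : Matrix n n R}
    (h : Q • LinearMap.range M.mulVecLin = ⊤) : Q * (span R {M} * ⊤) = ⊤ :=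
  eq_top_iff.2 fun B _ => B.sum_vecMulVec_col_single ▸
    sum_mem fun _ _ => vecMulVec_mem_mul_of_mem_smul (h ▸ mem_top) _

theorem top_smul_eq_top {N : Submodule F (n → F)} (hN : N ≠ ⊥) :
    (⊤ : Submodule F (Matrix n n F)) • N = ⊤ := by
  obtain ⟨c, hc, hc0⟩ := exists_mem_ne_zero_of_ne_bot hN
  obtain ⟨i, hi : c i ≠ 0⟩ := Function.ne_iff.1 hc0
  refine eq_top_iff.2 fun v _ => ?_
  have hv : vecMulVec v (Pi.single i (c i)⁻¹) • c = v := by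
    ext k
    simp [vecMulVec_apply, Pi.single_apply, mul_assoc, inv_mul_cancel₀ hi]
  exact hv ▸ smul_mem_smul mem_top hc

end Matrix

theorem length_le_of_rank_r_in_Lk_general
    (F : Type*) [Field F] (n : ℕ)
    (S : Finset (Matrix (Fin n) (Fin n) F))
    (hgen : IsGeneratingSystem F (S : Set (Matrix (Fin n) (Fin n) F)))
    (k r : ℕ) (hr : 0 < r)
    (M : Matrix (Fin n) (Fin n) F)
    (hM : M ∈ wordSpan F (S : Set (Matrix (Fin n) (Fin n) F)) k)
    (hrank : M.rank = r) :
    genLength F (S : Set (Matrix (Fin n) (Fin n) F)) ≤ r * n + n - r + k - 1 := by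
  set P := 1 ⊔ span F (S : Set (Matrix (Fin n) (Fin n) F))
  have hP1 : 1 ≤ P := le_sup_left
  have hP : ⨆ i, P ^ i = ⊤ := hgen.iSup_pow_eq_top
  have hM0 : M ≠ 0 := by rintro rfl; simp [← hrank] at hr
  have hrn : r ≤ n := hrank ▸ M.rank_le_width
  have hC : finrank F ↥(LinearMap.range M.mulVecLin) = r := hrank
  have hMA : span F {M} * P ^ (r * n - 1) = span F {M} * ⊤ := by
    refine mul_pow_eq_mul_top hP1 hP _ ?_
    have := M.finrank_span_singleton_mul_top_le
    rw [Fintype.card_fin, hrank, Nat.mul_comm] at this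
    rw [finrank_span_singleton hM0]
    have := Nat.mul_pos hr (hr.trans_le hrn)
    omega
  have hcols : P ^ (n - r) • LinearMap.range M.mulVecLin = ⊤ := by
    refine (pow_smul_eq_top_smul hP1 hP _ ?_).trans (top_smul_eq_top fun h => ?_)
    · have := finrank_le ((⊤ : Submodule F (Matrix (Fin n) (Fin n) F)) •
        LinearMap.range M.mulVecLin)
      rw [finrank_fin_fun] at this
      omega
    · rw [h, finrank_bot] at hC
      omega
  have hMk : span F {M} ≤ P ^ k := by rwa [span_singleton_le_iff_mem, ← wordSpan_eq_pow]
  refine Nat.sInf_le (eq_top_iff.2 ?_)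
  calc ⊤ = P ^ (n - r) * (span F {M} * P ^ (r * n - 1)) := by
        rw [hMA, mul_span_singleton_mul_top_eq_top hcols]
    _ ≤ P ^ (n - r) * (P ^ k * P ^ (r * n - 1)) := by gcongr
    _ = wordSpan F S (r * n + n - r + k - 1) := by
        rw [wordSpan_eq_pow, ← pow_add, ← pow_add]
        congr 1
        have := Nat.mul_pos hr (hr.trans_le hrn)
        omega

theorem length_le_of_rank_r_in_Lk
    (F : Type*) [Field F] (n : ℕ)
    (S : Finset (Matrix (Fin n) (Fin n) F))
    (hgen : IsGeneratingSystem F (S : Set (Matrix (Fin n) (Fin n) F)))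
    (k r : ℕ) (hk : 1 ≤ k) (hr : 0 < r)
    (M : Matrix (Fin n) (Fin n) F)
    (hM : M ∈ wordSpan F (S : Set (Matrix (Fin n) (Fin n) F)) k)
    (hrank : M.rank = r) :
    genLength F (S : Set (Matrix (Fin n) (Fin n) F)) ≤ r * n + n - r + k - 1 :=
  length_le_of_rank_r_in_Lk_general F n S hgen k r hr M hM hrank
end
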